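/- arXiv:2009.13866 — 4 statements merged into one kernel-verified Lean document; each statement's English description precedes it below -/
import Mathlib

section
/- For every η > 0 there exists a constant c_η > 0 such that the following holds: for every θ ∈ (0,1), every a, b ∈ (0,1) and every integer n ≥ 1 satisfying n^θ (1−b) ≥ (1+η) n a, one has P( ζ_1 + ⋯ + ζ_n ≥ n^θ and #{ 1 ≤ i ≤ n : ζ_i ≥ 1 } ≥ 2 ) ≤ 2 (n a)^2 · exp(−c_η n^θ (1−b)). -/
/-!
A union bound over ordered pairs `i ≠ j` reduces the event to `ζ_i ≥ 1, ζ_j ≥ 1,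
∑ ζ_k ≥ t` with `t = n^θ`. For this event, Markov's inequality applied to
`exp (L ∑ ζ_k)`, with the factors of `i` and `j` restricted to `ζ ≥ 1`, and independence give
the bound `e^{-L t} (a q)^2 (1 + a (q - 1))^{n-2}`, where `q = (1-b) e^L / (1 - b e^L)` is the
moment generating function of a geometric excursion length. For the tilt `L = c (1 - b)`
one has `q - 1 ≤ c e^c / (1 - c e^c)`, uniformly in `b`. Taking `c` small, `q - 1 ≤ c (1 + η/2)`
and `q^2 ≤ 2`, so the bound is at most `2 (n a)^2 exp (c (1 + η/2) n a - c (1 - b) t)`, and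
`(1 + η) n a ≤ t (1 - b)` turns the exponent into `-c η / (2 (1 + η)) · t (1 - b)`.
-/

open MeasureTheory ProbabilityTheory
open scoped ENNReal
open Real Finset

lemma Finset.prod_ite_or_eq {ι M : Type*} [DecidableEq ι] [CommMonoid M] {I : Finset ι} {i j : ι}
    (hi : i ∈ I) (hj : j ∈ I) (hij : i ≠ j) (x y : M) :
    ∏ k ∈ I, (if k = i ∨ k = j then x else y) = x ^ 2 * y ^ (#I - 2) := by
  have hpair : I.filter (fun k => k = i ∨ k = j) = {i, j} := by
    ext k; simp only [mem_filter, mem_insert, mem_singleton]; aesop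
  have hcard := card_filter_add_card_filter_not (s := I) (fun k => k = i ∨ k = j)
  rw [hpair, card_pair hij] at hcard
  rw [prod_ite, prod_const, prod_const, hpair, card_pair hij, ← hcard, Nat.add_sub_cancel_left]

section Law

variable {Ω : Type*} [MeasurableSpace Ω] {μ : Measure Ω} {Z : Ω → ℕ} {a b : ℝ}

lemma measure_eq_succ_of_tail (hZ : Measurable Z) (ha : 0 ≤ a) (hb : 0 ≤ b)
    (htail : ∀ k, 1 ≤ k → μ {ω | k ≤ Z ω} = ENNReal.ofReal (a * b ^ (k - 1))) (s : ℕ) :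
    μ {ω | Z ω = s + 1} = ENNReal.ofReal (a * (1 - b) * b ^ s) := by
  have hdiff : {ω | Z ω = s + 1} = {ω | s + 1 ≤ Z ω} \ {ω | s + 2 ≤ Z ω} := by
    ext ω; simp only [Set.mem_ofPred_eq, Set.mem_sdiff]; omega
  have hsub : {ω | s + 2 ≤ Z ω} ⊆ {ω | s + 1 ≤ Z ω} := fun ω (h : s + 2 ≤ Z ω) => by
    change s + 1 ≤ Z ω; omega
  rw [hdiff, measure_sdiff hsub (hZ measurableSet_Ici).nullMeasurableSet (by simp [htail]),
    htail _ le_add_self, htail _ (by omega), Nat.add_sub_cancel, show s + 2 - 1 = s + 1 by omega,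
    ← ENNReal.ofReal_sub _ (by positivity)]
  congr 1
  ring

lemma lintegral_comp_eq_of_tail (hZ : Measurable Z) (ha : 0 ≤ a) (hb : 0 ≤ b)
    (h0 : μ {ω | Z ω = 0} = ENNReal.ofReal (1 - a))
    (htail : ∀ k, 1 ≤ k → μ {ω | k ≤ Z ω} = ENNReal.ofReal (a * b ^ (k - 1))) (f : ℕ → ℝ≥0∞) :
    ∫⁻ ω, f (Z ω) ∂μ
      = f 0 * ENNReal.ofReal (1 - a) + ∑' s, f (s + 1) * ENNReal.ofReal (a * (1 - b) * b ^ s) := by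
  calc ∫⁻ ω, f (Z ω) ∂μ = ∑' m, f m * μ {ω | Z ω = m} := by
        rw [← lintegral_map measurable_from_top hZ, lintegral_countable']
        exact tsum_congr fun m => by rw [Measure.map_apply hZ (measurableSet_singleton m)]; rfl
    _ = _ := by
        rw [tsum_eq_zero_add' ENNReal.summable, h0]
        simp_rw [measure_eq_succ_of_tail hZ ha hb htail]

/-- The moment generating function `E[exp (L G)]` of a geometric variable `G` on `{1, 2, …}`
with `P(G = s + 1) = (1 - b) b ^ s`. -/
noncomputable def geomMGF (b L : ℝ) : ℝ := (1 - b) * exp L / (1 - b * exp L)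

lemma tsum_exp_mul_geom (ha : 0 ≤ a) (hb : 0 ≤ b) (hb1 : b ≤ 1) {L : ℝ} (hbL : b * exp L < 1) :
    ∑' s : ℕ, ENNReal.ofReal (exp (L * (s + 1 : ℕ))) * ENNReal.ofReal (a * (1 - b) * b ^ s)
      = ENNReal.ofReal (a * geomMGF b L) := by
  have hterm : ∀ s : ℕ,
      ENNReal.ofReal (exp (L * (s + 1 : ℕ))) * ENNReal.ofReal (a * (1 - b) * b ^ s)
        = ENNReal.ofReal (a * (1 - b) * exp L) * ENNReal.ofReal (b * exp L) ^ s := by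
    intro s
    rw [← ENNReal.ofReal_mul (exp_nonneg _), ← ENNReal.ofReal_pow (by positivity),
      ← ENNReal.ofReal_mul (by have := sub_nonneg.2 hb1; positivity)]
    congr 1
    rw [Nat.cast_succ, mul_add_one, exp_add, mul_comm L, exp_nat_mul, mul_pow]
    ring
  rw [tsum_congr hterm, ENNReal.tsum_mul_left, ENNReal.tsum_geometric, ← ENNReal.ofReal_one,
    ← ENNReal.ofReal_sub _ (by positivity), ← ENNReal.ofReal_inv_of_pos (by linarith),
    ← ENNReal.ofReal_mul (by have := sub_nonneg.2 hb1; positivity), geomMGF]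
  congr 1
  ring

lemma one_le_geomMGF {b L : ℝ} (hL : 0 ≤ L) (hbL : b * exp L < 1) : 1 ≤ geomMGF b L := by
  rw [geomMGF, le_div_iff₀ (by linarith)]
  nlinarith [one_le_exp hL]

noncomputable def expWeight (L : ℝ) (w : ℝ≥0∞) (m : ℕ) : ℝ≥0∞ :=
  if m = 0 then w else ENNReal.ofReal (exp (L * m))

lemma expWeight_of_ne_zero {L : ℝ} {w : ℝ≥0∞} {m : ℕ} (hm : m ≠ 0) :
    expWeight L w m = ENNReal.ofReal (exp (L * m)) :=
  if_neg hm

lemma expWeight_one (L : ℝ) (m : ℕ) : expWeight L 1 m = ENNReal.ofReal (exp (L * m)) := by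
  rcases eq_or_ne m 0 with rfl | hm
  · simp [expWeight]
  · exact expWeight_of_ne_zero hm

lemma lintegral_expWeight (hZ : Measurable Z) (ha : 0 ≤ a) (hb : 0 ≤ b) (hb1 : b ≤ 1)
    (h0 : μ {ω | Z ω = 0} = ENNReal.ofReal (1 - a))
    (htail : ∀ k, 1 ≤ k → μ {ω | k ≤ Z ω} = ENNReal.ofReal (a * b ^ (k - 1)))
    {L : ℝ} (hbL : b * exp L < 1) (w : ℝ≥0∞) :
    ∫⁻ ω, expWeight L w (Z ω) ∂μ
      = w * ENNReal.ofReal (1 - a) + ENNReal.ofReal (a * geomMGF b L) := by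
  rw [lintegral_comp_eq_of_tail hZ ha hb h0 htail, ← tsum_exp_mul_geom ha hb hb1 hbL]
  simp only [expWeight, Nat.succ_ne_zero, if_true, if_false]

end Law

lemma prod_expWeight_eq {ι Ω : Type*} {ζ : ι → Ω → ℕ} {I : Finset ι} {w : ι → ℝ≥0∞} {ω : Ω}
    (L : ℝ) (hw : ∀ k ∈ I, ζ k ω = 0 → w k = 1) :
    ∏ k ∈ I, expWeight L (w k) (ζ k ω) = ENNReal.ofReal (exp (L * ∑ k ∈ I, (ζ k ω : ℝ))) := by
  have hfactor : ∀ k ∈ I, expWeight L (w k) (ζ k ω) = ENNReal.ofReal (exp (L * ζ k ω)) := by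
    intro k hk
    by_cases h : ζ k ω = 0
    · rw [hw k hk h, expWeight_one]
    · exact expWeight_of_ne_zero h
  rw [prod_congr rfl hfactor, ← ENNReal.ofReal_prod_of_nonneg fun _ _ => exp_nonneg _,
    ← exp_sum, mul_sum]

lemma measureReal_two_excursions_sum_ge_le {ι Ω : Type*} [DecidableEq ι] [MeasurableSpace Ω]
    {μ : Measure Ω} {ζ : ι → Ω → ℕ} (hζ : ∀ k, Measurable (ζ k)) (hind : iIndepFun ζ μ)
    {I : Finset ι} {a b L : ℝ} (ha0 : 0 ≤ a) (ha1 : a ≤ 1) (hb0 : 0 ≤ b) (hb1 : b ≤ 1)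
    (h0 : ∀ k ∈ I, μ {ω | ζ k ω = 0} = ENNReal.ofReal (1 - a))
    (htail : ∀ k ∈ I, ∀ m, 1 ≤ m → μ {ω | m ≤ ζ k ω} = ENNReal.ofReal (a * b ^ (m - 1)))
    (hL : 0 ≤ L) (hbL : b * exp L < 1) {i j : ι} (hi : i ∈ I) (hj : j ∈ I) (hij : i ≠ j) (t : ℝ) :
    μ.real {ω | 1 ≤ ζ i ω ∧ 1 ≤ ζ j ω ∧ t ≤ ∑ k ∈ I, (ζ k ω : ℝ)}
      ≤ exp (-(L * t)) * (a * geomMGF b L) ^ 2 * (1 - a + a * geomMGF b L) ^ (#I - 2) := by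
  have hq := one_le_geomMGF hL hbL
  have hq' : 0 ≤ 1 - a + a * geomMGF b L := by nlinarith
  -- the two excursions are forced by giving `ζ i = 0` and `ζ j = 0` weight `0`
  set w : ι → ℝ≥0∞ := fun k => if k = i ∨ k = j then 0 else 1
  set F : Ω → ℝ≥0∞ := fun ω => ENNReal.ofReal (exp (-(L * t))) * ∏ k ∈ I, expWeight L (w k) (ζ k ω)
  have hmeas : ∀ k, Measurable fun ω => expWeight L (w k) (ζ k ω) :=
    fun k => (measurable_from_top (f := expWeight L (w k))).comp (hζ k)
  have hsub : {ω | 1 ≤ ζ i ω ∧ 1 ≤ ζ j ω ∧ t ≤ ∑ k ∈ I, (ζ k ω : ℝ)} ⊆ {ω | 1 ≤ F ω} := by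
    rintro ω ⟨hζi, hζj, hsum⟩
    have hw : ∀ k ∈ I, ζ k ω = 0 → w k = 1 := by
      intro k _ hk
      have : ¬ (k = i ∨ k = j) := by rintro (rfl | rfl) <;> omega
      simp only [w, if_neg this]
    change 1 ≤ ENNReal.ofReal (exp (-(L * t))) * ∏ k ∈ I, expWeight L (w k) (ζ k ω)
    rw [prod_expWeight_eq L hw, ← ENNReal.ofReal_mul (exp_nonneg _), ← exp_add,
      ← ENNReal.ofReal_one, ← exp_zero]
    exact ENNReal.ofReal_le_ofReal (exp_le_exp.2 (by nlinarith))
  have hfactor : ∀ k ∈ I, ∫⁻ ω, expWeight L (w k) (ζ k ω) ∂μ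
      = if k = i ∨ k = j then ENNReal.ofReal (a * geomMGF b L)
        else ENNReal.ofReal (1 - a + a * geomMGF b L) := by
    intro k hk
    rw [lintegral_expWeight (hζ k) ha0 hb0 hb1 (h0 k hk) (htail k hk) hbL]
    split_ifs with h
    · simp [w, h]
    · simp only [w, if_neg h, one_mul]
      rw [ENNReal.ofReal_add (by linarith) (by positivity)]
  have hμ : μ {ω | 1 ≤ ζ i ω ∧ 1 ≤ ζ j ω ∧ t ≤ ∑ k ∈ I, (ζ k ω : ℝ)} ≤ ENNReal.ofReal
      (exp (-(L * t)) * (a * geomMGF b L) ^ 2 * (1 - a + a * geomMGF b L) ^ (#I - 2)) := calc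
    _ ≤ μ {ω | 1 ≤ F ω} := measure_mono hsub
    _ ≤ ∫⁻ ω, F ω ∂μ := by
        simpa using mul_meas_ge_le_lintegral₀ (μ := μ)
          ((Finset.measurable_prod I fun k _ => hmeas k).const_mul _).aemeasurable 1
    _ = ENNReal.ofReal (exp (-(L * t))) * ∏ k ∈ I, ∫⁻ ω, expWeight L (w k) (ζ k ω) ∂μ := by
        rw [lintegral_const_mul _ (Finset.measurable_prod I fun k _ => hmeas k),
          lintegral_prod_eq_prod_lintegral_of_indepFun I (fun k ω => expWeight L (w k) (ζ k ω))
            (hind.comp (fun k => expWeight L (w k)) fun _ => measurable_from_top) hmeas]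
    _ = _ := by
        rw [prod_congr rfl hfactor, prod_ite_or_eq hi hj hij, ← ENNReal.ofReal_pow (by positivity),
          ← ENNReal.ofReal_pow hq', ← ENNReal.ofReal_mul (by positivity),
          ← ENNReal.ofReal_mul (exp_nonneg _), mul_assoc]
  exact ENNReal.toReal_le_of_le_ofReal (by positivity) hμ

section Tilt

lemma exp_sub_one_le_mul_exp (x : ℝ) : exp x - 1 ≤ x * exp x := by
  have h := mul_le_mul_of_nonneg_left (add_one_le_exp (-x)) (exp_pos x).le
  rw [← exp_add, add_neg_cancel, exp_zero] at h
  linarith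

variable {b c : ℝ}

lemma exp_mul_one_sub_sub_one_le (hc : 0 ≤ c) (hb0 : 0 ≤ b) (hb1 : b ≤ 1) :
    exp (c * (1 - b)) - 1 ≤ (1 - b) * (c * exp c) := calc
  exp (c * (1 - b)) - 1 ≤ c * (1 - b) * exp (c * (1 - b)) := exp_sub_one_le_mul_exp _
  _ ≤ c * (1 - b) * exp c := by gcongr; nlinarith
  _ = (1 - b) * (c * exp c) := by ring

lemma mul_one_sub_le_one_sub_mul_exp (hc : 0 ≤ c) (hb0 : 0 ≤ b) (hb1 : b ≤ 1) :
    (1 - b) * (1 - c * exp c) ≤ 1 - b * exp (c * (1 - b)) := by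
  nlinarith [exp_mul_one_sub_sub_one_le hc hb0 hb1, one_le_exp (by nlinarith : 0 ≤ c * (1 - b))]

lemma mul_exp_mul_one_sub_lt_one (hc : 0 ≤ c) (hb0 : 0 ≤ b) (hb1 : b < 1)
    (hce : c * exp c < 1) : b * exp (c * (1 - b)) < 1 :=
  sub_pos.1 <| (mul_pos (sub_pos.2 hb1) (sub_pos.2 hce)).trans_le
    (mul_one_sub_le_one_sub_mul_exp hc hb0 hb1.le)

lemma geomMGF_sub_one_le (hc : 0 ≤ c) (hb0 : 0 ≤ b) (hb1 : b < 1) (hce : c * exp c < 1) :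
    geomMGF b (c * (1 - b)) - 1 ≤ c * (exp c / (1 - c * exp c)) := by
  have hden := mul_one_sub_le_one_sub_mul_exp hc hb0 hb1.le
  have hden0 := sub_pos.2 (mul_exp_mul_one_sub_lt_one hc hb0 hb1 hce)
  calc geomMGF b (c * (1 - b)) - 1 = (exp (c * (1 - b)) - 1) / (1 - b * exp (c * (1 - b))) := by
        rw [geomMGF, div_sub_one hden0.ne']; ring_nf
    _ ≤ (1 - b) * (c * exp c) / ((1 - b) * (1 - c * exp c)) :=
        div_le_div₀ (by positivity) (exp_mul_one_sub_sub_one_le hc hb0 hb1.le) (by nlinarith) hden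
    _ = c * (exp c / (1 - c * exp c)) := by
        rw [mul_div_mul_left _ _ (by linarith), mul_div_assoc]

end Tilt

lemma one_sub_add_mul_pow_le_exp {a q : ℝ} (ha : 0 ≤ a) (hq : 1 ≤ q) {m : ℕ} (n : ℕ) (hmn : m ≤ n) :
    (1 - a + a * q) ^ m ≤ exp (n * (a * (q - 1))) := calc
  (1 - a + a * q) ^ m ≤ exp (a * (q - 1)) ^ m := by
      gcongr
      · nlinarith
      · linarith [add_one_le_exp (a * (q - 1))]
  _ ≤ exp (a * (q - 1)) ^ n := pow_le_pow_right₀ (one_le_exp (by nlinarith)) hmn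
  _ = exp (n * (a * (q - 1))) := (exp_nat_mul _ _).symm

lemma chernoff_exponent_le {η c a b q t n : ℝ} (hη : 0 < η) (hc : 0 ≤ c) (ha : 0 ≤ a)
    (hn : 0 ≤ n) (hqc : q - 1 ≤ c * (1 + η / 2)) (hcond : (1 + η) * n * a ≤ t * (1 - b)) :
    -(c * (1 - b) * t) + n * (a * (q - 1)) ≤ -(c * η / (2 * (1 + η))) * t * (1 - b) := by
  have : n * (a * (q - 1)) ≤ c * (1 + η / 2) / (1 + η) * (t * (1 - b)) := calc
    _ ≤ n * (a * (c * (1 + η / 2))) := by gcongr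
    _ = c * (1 + η / 2) / (1 + η) * ((1 + η) * n * a) := by field_simp
    _ ≤ _ := by gcongr
  have hid : -(c * (1 - b) * t) + c * (1 + η / 2) / (1 + η) * (t * (1 - b))
      = -(c * η / (2 * (1 + η))) * t * (1 - b) := by field_simp; ring
  linarith

open Filter Topology in
lemma exists_small_tilt_const {η : ℝ} (hη : 0 < η) :
    ∃ c > 0, c * exp c < 1 ∧ exp c / (1 - c * exp c) ≤ 1 + η / 2 ∧
      (1 + c * (1 + η / 2)) ^ 2 ≤ 2 := by
  have hce : Tendsto (fun c => c * exp c) (𝓝 0) (𝓝 0) :=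
    (by fun_prop : Continuous fun c => c * exp c).tendsto' 0 0 (by simp)
  have hratio : Tendsto (fun c => exp c / (1 - c * exp c)) (𝓝 0) (𝓝 1) := by
    have h : ContinuousAt (fun c => exp c / (1 - c * exp c)) 0 := by fun_prop (disch := simp)
    simpa using h.tendsto
  have hsq : Tendsto (fun c : ℝ => (1 + c * (1 + η / 2)) ^ 2) (𝓝 0) (𝓝 1) :=
    (by fun_prop : Continuous fun c : ℝ => (1 + c * (1 + η / 2)) ^ 2).tendsto' 0 1 (by simp)
  obtain ⟨c, hc, h1, h2, h3⟩ := ((eventually_mem_nhdsWithin (s := Set.Ioi (0 : ℝ))).and <|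
    ((hce.eventually_lt_const one_pos).and <|
      (hratio.eventually_lt_const (by linarith : (1 : ℝ) < 1 + η / 2)).and
        (hsq.eventually_lt_const one_lt_two)).filter_mono nhdsWithin_le_nhds).exists
  exact ⟨c, hc, h1, h2.le, h3.le⟩

lemma measureReal_sum_ge_two_excursions_le {ι Ω : Type*} [DecidableEq ι] [MeasurableSpace Ω]
    {μ : Measure Ω} {ζ : ι → Ω → ℕ} (hζ : ∀ k, Measurable (ζ k)) (hind : iIndepFun ζ μ)
    {I : Finset ι} {a b L : ℝ} (ha0 : 0 ≤ a) (ha1 : a ≤ 1) (hb0 : 0 ≤ b) (hb1 : b ≤ 1)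
    (h0 : ∀ k ∈ I, μ {ω | ζ k ω = 0} = ENNReal.ofReal (1 - a))
    (htail : ∀ k ∈ I, ∀ m, 1 ≤ m → μ {ω | m ≤ ζ k ω} = ENNReal.ofReal (a * b ^ (m - 1)))
    (hL : 0 ≤ L) (hbL : b * exp L < 1) (t : ℝ) :
    μ.real {ω | t ≤ ∑ k ∈ I, (ζ k ω : ℝ) ∧ 2 ≤ #(I.filter fun k => 1 ≤ ζ k ω)}
      ≤ #I ^ 2 *
        (exp (-(L * t)) * (a * geomMGF b L) ^ 2 * (1 - a + a * geomMGF b L) ^ (#I - 2)) := by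
  have : IsProbabilityMeasure μ := hind.isProbabilityMeasure
  have hunion : {ω | t ≤ ∑ k ∈ I, (ζ k ω : ℝ) ∧ 2 ≤ #(I.filter fun k => 1 ≤ ζ k ω)}
      ⊆ ⋃ p ∈ I.offDiag, {ω | 1 ≤ ζ p.1 ω ∧ 1 ≤ ζ p.2 ω ∧ t ≤ ∑ k ∈ I, (ζ k ω : ℝ)} := by
    rintro ω ⟨hsum, hcard⟩
    obtain ⟨i, hi, j, hj, hij⟩ := one_lt_card.1 hcard
    rw [mem_filter] at hi hj
    exact Set.mem_biUnion (x := (i, j)) (mem_offDiag.2 ⟨hi.1, hj.1, hij⟩) ⟨hi.2, hj.2, hsum⟩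
  have hcard : (#I.offDiag : ℝ) ≤ #I ^ 2 := by
    rw [offDiag_card, sq]
    exact_mod_cast Nat.sub_le _ _
  calc _ ≤ μ.real (⋃ p ∈ I.offDiag, {ω | 1 ≤ ζ p.1 ω ∧ 1 ≤ ζ p.2 ω ∧ t ≤ ∑ k ∈ I, (ζ k ω : ℝ)}) :=
        measureReal_mono hunion (measure_ne_top μ _)
    _ ≤ ∑ p ∈ I.offDiag, μ.real {ω | 1 ≤ ζ p.1 ω ∧ 1 ≤ ζ p.2 ω ∧ t ≤ ∑ k ∈ I, (ζ k ω : ℝ)} :=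
        measureReal_biUnion_finset_le _ _
    _ ≤ ∑ _p ∈ I.offDiag,
          exp (-(L * t)) * (a * geomMGF b L) ^ 2 * (1 - a + a * geomMGF b L) ^ (#I - 2) :=
        sum_le_sum fun p hp => by
          obtain ⟨hi, hj, hij⟩ := mem_offDiag.1 hp
          exact measureReal_two_excursions_sum_ge_le hζ hind ha0 ha1 hb0 hb1 h0 htail hL hbL
            hi hj hij t
    _ ≤ _ := by
        have hq : 0 ≤ 1 - a + a * geomMGF b L := by nlinarith [one_le_geomMGF hL hbL]
        rw [sum_const, nsmul_eq_mul]
        exact mul_le_mul_of_nonneg_right hcard (mul_nonneg (by positivity) (pow_nonneg hq _))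

/-- For every `η > 0` there exists `c_η > 0` such that for every `θ ∈ (0,1)`,
`a, b ∈ (0,1)` and `n ≥ 1` with `n^θ (1-b) ≥ (1+η) n a`, and every i.i.d. sequence
`(ζ_i)` of `ℕ`-valued random variables with `P(ζ_1 = 0) = 1 - a` and
`P(ζ_1 ≥ k) = a b^(k-1)` for `k ≥ 1`, one has
`P(ζ_1 + ⋯ + ζ_n ≥ n^θ, #{1 ≤ i ≤ n : ζ_i ≥ 1} ≥ 2) ≤ 2 (n a)^2 exp(-c_η n^θ (1-b))`. -/
theorem sumGeo_large_two_excursions :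
    ∀ η : ℝ, 0 < η → ∃ c : ℝ, 0 < c ∧
      ∀ (θ a b : ℝ) (n : ℕ),
        θ ∈ Set.Ioo (0:ℝ) 1 → a ∈ Set.Ioo (0:ℝ) 1 → b ∈ Set.Ioo (0:ℝ) 1 →
        1 ≤ n → (1 + η) * n * a ≤ (n : ℝ) ^ θ * (1 - b) →
        ∀ (Ω : Type) (_ : MeasurableSpace Ω) (μ : Measure Ω), IsProbabilityMeasure μ →
        ∀ ζ : ℕ → Ω → ℕ, (∀ i, Measurable (ζ i)) →
          iIndepFun ζ μ →
          (∀ i, 1 ≤ i → μ {ω | ζ i ω = 0} = ENNReal.ofReal (1 - a)) →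
          (∀ i k, 1 ≤ i → 1 ≤ k → μ {ω | k ≤ ζ i ω} = ENNReal.ofReal (a * b ^ (k - 1))) →
          (μ {ω | (n : ℝ) ^ θ ≤ ∑ i ∈ Finset.Icc 1 n, (ζ i ω : ℝ) ∧
              2 ≤ ((Finset.Icc 1 n).filter (fun i => 1 ≤ ζ i ω)).card}).toReal
            ≤ 2 * ((n : ℝ) * a) ^ 2 * Real.exp (-c * (n : ℝ) ^ θ * (1 - b)) := by
  intro η hη
  obtain ⟨c, hc, hce, hratio, hsq⟩ := exists_small_tilt_const hη
  refine ⟨c * η / (2 * (1 + η)), by positivity, ?_⟩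
  intro θ a b n _ ⟨ha0, ha1⟩ ⟨hb0, hb1⟩ _ hcond Ω _ μ _ ζ hζ hind h0 htail
  set t := (n : ℝ) ^ θ
  set L := c * (1 - b)
  set q := geomMGF b L
  have hbL : b * exp L < 1 := mul_exp_mul_one_sub_lt_one hc.le hb0.le hb1 hce
  have hq1 : 1 ≤ q := one_le_geomMGF (by positivity) hbL
  have hqc : q - 1 ≤ c * (1 + η / 2) :=
    (geomMGF_sub_one_le hc.le hb0.le hb1 hce).trans (mul_le_mul_of_nonneg_left hratio hc.le)
  have hq2 : q ^ 2 ≤ 2 := le_trans (by gcongr; linarith) hsq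
  have hμ := measureReal_sum_ge_two_excursions_le hζ hind (I := Finset.Icc 1 n) ha0.le ha1.le
    hb0.le hb1.le (fun k hk => h0 k (Finset.mem_Icc.1 hk).1)
    (fun k hk m hm => htail k m (Finset.mem_Icc.1 hk).1 hm) (by positivity) hbL t
  rw [Nat.card_Icc, Nat.add_sub_cancel] at hμ
  calc _ ≤ _ := hμ
    _ ≤ n ^ 2 * (exp (-(L * t)) * (a ^ 2 * 2) * exp (n * (a * (q - 1)))) := by
        rw [mul_pow a]
        gcongr
        exact one_sub_add_mul_pow_le_exp ha0.le hq1 n (Nat.sub_le n 2)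
    _ = 2 * (n * a) ^ 2 * exp (-(L * t) + n * (a * (q - 1))) := by rw [exp_add]; ring
    _ ≤ _ := by gcongr; exact chernoff_exponent_le hη hc.le ha0.le n.cast_nonneg hqc hcond
end

section
/- For every A > 0, every λ with 0 < λ < 1 and every integer n ≥ 1, one has P( ζ_1 + ⋯ + ζ_n ≤ A ) ≤ exp( −λ ( n a / (1+λ) − (1−b) A ) ). -/
/-!
Chernoff's bound for the lower tail at `t = -λ(1-b) ≤ 0` gives
`P(ζ_1 + ⋯ + ζ_n ≤ A) ≤ e^{λ(1-b)A} E[e^{tζ_1}]^n`.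
The tails determine the law: `P(ζ = 0) = 1 - a` and `P(ζ = k+1) = a(1-b)b^k`, so with `u = e^t`
the moment generating function is `1 - a(1-u)/(1-bu)`. As `u(1 + λ(1-b)) ≤ 1` by `1 + s ≤ e^s`,
this is at most `1 - λa/(1+λ) ≤ e^{-λa/(1+λ)}`.
-/

open MeasureTheory ProbabilityTheory

open Real Finset

section

variable {Ω : Type*} [MeasurableSpace Ω] {μ : Measure Ω} {Z : Ω → ℕ}

lemma integrable_exp_mul_of_nonpos_of_nonneg [IsFiniteMeasure μ] {X : Ω → ℝ}
    (hX : AEMeasurable X μ) (hX0 : ∀ ω, 0 ≤ X ω) {t : ℝ} (ht : t ≤ 0) :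
    Integrable (fun ω => exp (t * X ω)) μ := by
  refine (integrable_const (1 : ℝ)).mono' (hX.const_mul t).exp.aestronglyMeasurable ?_
  filter_upwards with ω
  rw [norm_of_nonneg (exp_nonneg _), exp_le_one_iff]
  exact mul_nonpos_of_nonpos_of_nonneg ht (hX0 ω)

lemma hasSum_mgf_natCast [IsFiniteMeasure μ] (hZ : Measurable Z) {t : ℝ} (ht : t ≤ 0) :
    HasSum (fun k : ℕ => μ.real {ω | Z ω = k} * exp t ^ k)
      (mgf (fun ω => (Z ω : ℝ)) μ t) := by
  have hint : Integrable (fun k : ℕ => exp (t * k)) (μ.map Z) :=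
    integrable_exp_mul_of_nonpos_of_nonneg measurable_from_top.aemeasurable
      (fun k => k.cast_nonneg) ht
  rw [mgf, ← integral_map (f := fun k : ℕ => exp (t * k)) hZ.aemeasurable
    measurable_from_top.aestronglyMeasurable, ← Measure.sum_smul_dirac (μ.map Z)]
  rw [← Measure.sum_smul_dirac (μ.map Z)] at hint
  refine (hasSum_integral_measure hint).congr_fun fun k => ?_
  rw [integral_smul_measure, integral_dirac, smul_eq_mul, ← measureReal_def,
    map_measureReal_apply hZ (measurableSet_singleton k), ← exp_nat_mul, mul_comm t]
  rfl

lemma measureReal_eq_sub_of_le [IsFiniteMeasure μ] (hZ : Measurable Z) (k : ℕ) :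
    μ.real {ω | Z ω = k} = μ.real {ω | k ≤ Z ω} - μ.real {ω | k + 1 ≤ Z ω} := by
  have hsplit : {ω | k ≤ Z ω} = {ω | Z ω = k} ∪ {ω | k + 1 ≤ Z ω} := by
    ext ω; simp only [Set.mem_ofPred_eq, Set.mem_union]; omega
  have hdisj : Disjoint {ω | Z ω = k} {ω | k + 1 ≤ Z ω} :=
    Set.disjoint_left.mpr fun ω h1 h2 => by simp only [Set.mem_ofPred_eq] at h1 h2; omega
  rw [hsplit, measureReal_union hdisj (hZ measurableSet_Ici)]
  ring

lemma mgf_natCast_of_geometric_tail [IsProbabilityMeasure μ] (hZ : Measurable Z) {a b : ℝ}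
    (ha : 0 ≤ a) (hb : 0 ≤ b) (hb1 : b < 1)
    (htail : ∀ k, 1 ≤ k → μ {ω | k ≤ Z ω} = ENNReal.ofReal (a * b ^ (k - 1)))
    {t : ℝ} (ht : t ≤ 0) :
    mgf (fun ω => (Z ω : ℝ)) μ t = 1 - a + a * (1 - b) * exp t / (1 - b * exp t) := by
  have htail' : ∀ k : ℕ, μ.real {ω | k + 1 ≤ Z ω} = a * b ^ k := fun k => by
    rw [measureReal_def, htail (k + 1) k.succ_pos, Nat.add_sub_cancel,
      ENNReal.toReal_ofReal (by positivity)]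
  have hmass_zero : μ.real {ω | Z ω = 0} = 1 - a := by
    simpa [measureReal_eq_sub_of_le hZ 0] using htail' 0
  have hmass_succ : ∀ k : ℕ, μ.real {ω | Z ω = k + 1} = a * (1 - b) * b ^ k := fun k => by
    rw [measureReal_eq_sub_of_le hZ, htail', htail']
    ring
  set u := exp t
  have hbu : b * u < 1 :=
    calc b * u ≤ b := mul_le_of_le_one_right hb (exp_le_one_iff.mpr ht)
      _ < 1 := hb1
  have hgeom : HasSum (fun k : ℕ => μ.real {ω | Z ω = k + 1} * u ^ (k + 1))
      (a * (1 - b) * u * (1 - b * u)⁻¹) :=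
    ((hasSum_geometric_of_lt_one (by positivity) hbu).mul_left _).congr_fun fun k => by
      rw [hmass_succ]
      ring
  rw [div_eq_mul_inv]
  refine (hasSum_mgf_natCast hZ ht).unique ?_
  simpa [hmass_zero] using hgeom.zero_add (f := fun k => μ.real {ω | Z ω = k} * u ^ k)

lemma measureReal_sum_le_le_of_mgf_le {ι : Type*} {X : ι → Ω → ℝ} (hindep : iIndepFun X μ)
    (hX : ∀ i, Measurable (X i)) {s : Finset ι} {t c : ℝ} (ht : t ≤ 0)
    (hint : ∀ i ∈ s, Integrable (fun ω => exp (t * X i ω)) μ)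
    (hc : ∀ i ∈ s, mgf (X i) μ t ≤ c) (A : ℝ) :
    μ.real {ω | ∑ i ∈ s, X i ω ≤ A} ≤ exp (-t * A) * c ^ #s := by
  have := hindep.isProbabilityMeasure
  calc μ.real {ω | ∑ i ∈ s, X i ω ≤ A} ≤ exp (-t * A) * mgf (∑ i ∈ s, X i) μ t := by
        simpa only [Finset.sum_apply] using
          measure_le_le_exp_mul_mgf A ht (hindep.integrable_exp_mul_sum hX hint)
    _ = exp (-t * A) * ∏ i ∈ s, mgf (X i) μ t := by rw [hindep.mgf_sum hX]
    _ ≤ exp (-t * A) * ∏ _i ∈ s, c := by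
        gcongr with i hi
        exacts [fun _ _ => mgf_nonneg, hc i hi]
    _ = exp (-t * A) * c ^ #s := by rw [prod_const]

end

lemma one_sub_add_geometric_le_exp {a b lam : ℝ} (ha : 0 ≤ a) (hb1 : b < 1) (hlam : 0 ≤ lam) :
    1 - a + a * (1 - b) * exp (-(lam * (1 - b))) / (1 - b * exp (-(lam * (1 - b))))
      ≤ exp (-(lam * a / (1 + lam))) := by
  set s := lam * (1 - b)
  set u := exp (-s)
  have hs : 0 ≤ s := mul_nonneg hlam (by linarith)
  have hu0 : 0 < u := exp_pos _
  have hu : u * (1 + s) ≤ 1 :=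
    calc u * (1 + s) ≤ u * exp s := by gcongr; linarith [add_one_le_exp s]
      _ = 1 := by rw [← exp_add, neg_add_cancel, exp_zero]
  have hbu : 0 < 1 - b * u := by nlinarith
  have hmean : lam * a / (1 + lam) ≤ a * (1 - u) / (1 - b * u) := by
    rw [div_le_div_iff₀ (by linarith) hbu]
    nlinarith [mul_nonneg ha (sub_nonneg.2 hu)]
  calc 1 - a + a * (1 - b) * u / (1 - b * u) = 1 - a * (1 - u) / (1 - b * u) := by
        field_simp
        ring
    _ ≤ -(lam * a / (1 + lam)) + 1 := by linarith
    _ ≤ exp (-(lam * a / (1 + lam))) := add_one_le_exp _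

theorem sumGeo_small_general {Ω : Type*} [MeasurableSpace Ω] (μ : Measure Ω)
    [IsProbabilityMeasure μ] (a b : ℝ) (ha : a ∈ Set.Ioo (0:ℝ) 1)
    (hb : b ∈ Set.Ioo (0:ℝ) 1) (ζ : ℕ → Ω → ℕ)
    (hmeas : ∀ i, Measurable (ζ i))
    (hindep : iIndepFun ζ μ)
    (htail : ∀ i k, 1 ≤ i → 1 ≤ k → μ {ω | k ≤ ζ i ω} = ENNReal.ofReal (a * b ^ (k - 1))) :
    ∀ A : ℝ, 0 < A → ∀ lam : ℝ, 0 < lam → lam < 1 → ∀ n : ℕ, 1 ≤ n →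
      (μ {ω | (∑ i ∈ Finset.Icc 1 n, (ζ i ω : ℝ)) ≤ A}).toReal
        ≤ Real.exp (-lam * ((n : ℝ) * a / (1 + lam) - (1 - b) * A)) := by
  intro A _ lam hlam _ n _
  set t := -(lam * (1 - b)) with ht_def
  have ht : t ≤ 0 := neg_nonpos.2 (mul_nonneg hlam.le (sub_nonneg.2 hb.2.le))
  have hX : ∀ i, Measurable fun ω => (ζ i ω : ℝ) :=
    fun i => measurable_from_top.comp (hmeas i)
  have hmgf : ∀ i ∈ Icc 1 n,
      mgf (fun ω => (ζ i ω : ℝ)) μ t ≤ exp (-(lam * a / (1 + lam))) := fun i hi => by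
    rw [mgf_natCast_of_geometric_tail (hmeas i) ha.1.le hb.1.le hb.2
      (fun k => htail i k (mem_Icc.1 hi).1) ht]
    exact one_sub_add_geometric_le_exp ha.1.le hb.2 hlam.le
  calc μ.real {ω | ∑ i ∈ Icc 1 n, (ζ i ω : ℝ) ≤ A}
      ≤ exp (-t * A) * exp (-(lam * a / (1 + lam))) ^ #(Icc 1 n) :=
        measureReal_sum_le_le_of_mgf_le (hindep.comp _ fun _ => measurable_from_top) hX ht
          (fun i _ => integrable_exp_mul_of_nonpos_of_nonneg (hX i).aemeasurable
            (fun ω => (ζ i ω).cast_nonneg) ht) hmgf A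
    _ = exp (-lam * ((n : ℝ) * a / (1 + lam) - (1 - b) * A)) := by
        rw [Nat.card_Icc, Nat.add_sub_cancel, ← exp_nat_mul, ← exp_add]
        congr 1
        rw [ht_def]
        ring

/-- Let `a, b ∈ (0,1)` and `(ζ_i)` be i.i.d. `ℕ`-valued random variables with
`P(ζ_1 = 0) = 1 - a` and `P(ζ_1 ≥ k) = a b^(k-1)` for `k ≥ 1`. Then for every `A > 0`,
every `0 < λ < 1` and every `n ≥ 1`,
`P(ζ_1 + ⋯ + ζ_n ≤ A) ≤ exp(-λ (n a / (1+λ) - (1-b) A))`. -/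
theorem sumGeo_small {Ω : Type*} [MeasurableSpace Ω] (μ : Measure Ω)
    [IsProbabilityMeasure μ] (a b : ℝ) (ha : a ∈ Set.Ioo (0:ℝ) 1)
    (hb : b ∈ Set.Ioo (0:ℝ) 1) (ζ : ℕ → Ω → ℕ)
    (hmeas : ∀ i, Measurable (ζ i))
    (hindep : iIndepFun ζ μ)
    (hzero : ∀ i, 1 ≤ i → μ {ω | ζ i ω = 0} = ENNReal.ofReal (1 - a))
    (htail : ∀ i k, 1 ≤ i → 1 ≤ k → μ {ω | k ≤ ζ i ω} = ENNReal.ofReal (a * b ^ (k - 1))) :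
    ∀ A : ℝ, 0 < A → ∀ lam : ℝ, 0 < lam → lam < 1 → ∀ n : ℕ, 1 ≤ n →
      (μ {ω | (∑ i ∈ Finset.Icc 1 n, (ζ i ω : ℝ)) ≤ A}).toReal
        ≤ Real.exp (-lam * ((n : ℝ) * a / (1 + lam) - (1 - b) * A)) :=
  sumGeo_small_general μ a b ha hb ζ hmeas hindep htail
end

section
/- For every δ ∈ [0,1) there exist a constant C > 0 and A₀ > 0 (depending only on δ and the law of ξ_1) such that for every real A ≥ A₀, the sum over integers k with 1 ≤ k ≤ A^{1+δ} of P( S_k ≥ A ) is at most exp(−C A^{1−δ}). -/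
/-!
A centred variable with exponential moments is locally sub-Gaussian: `E[e^{tξ}] ≤ exp(K t²)` for
`0 ≤ t ≤ δ₀/2`, so Chernoff's bound gives `P(S_k ≥ A) ≤ exp(-tA + kKt²)`. For `k ≤ A^{1+δ}` the
choice `t = θ A^{-δ}` with `Kθ ≤ 1/2` bounds every term by `exp(-(θ/2) A^{1-δ})`, and the
polynomially many terms cost only another factor `exp((θ/4) A^{1-δ})`.
-/

open MeasureTheory ProbabilityTheory Filter

/-- The random walk `S_n = ξ_1 + ⋯ + ξ_n` (with `S_0 = 0`). -/
noncomputable def walkS {Ω : Type*} (ξ : ℕ → Ω → ℝ) (n : ℕ) (ω : Ω) : ℝ :=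
  ∑ i ∈ Finset.range n, ξ i ω

/-- `S̄_n = max_{0 ≤ k ≤ n} S_k`. -/
noncomputable def walkMax {Ω : Type*} (ξ : ℕ → Ω → ℝ) (n : ℕ) (ω : Ω) : ℝ :=
  (Finset.range (n + 1)).sup' (Finset.nonempty_range_iff.mpr (Nat.succ_ne_zero n))
    fun k => walkS ξ k ω

/-- `S̲_n = min_{0 ≤ k ≤ n} S_k`. -/
noncomputable def walkMin {Ω : Type*} (ξ : ℕ → Ω → ℝ) (n : ℕ) (ω : Ω) : ℝ :=
  (Finset.range (n + 1)).inf' (Finset.nonempty_range_iff.mpr (Nat.succ_ne_zero n))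
    fun k => walkS ξ k ω

open Real

namespace Real

lemma exp_le_one_add_add_sq_mul_exp_abs (u : ℝ) : exp u ≤ 1 + u + u ^ 2 * exp |u| := by
  have h1 : 1 ≤ exp |u| := one_le_exp (abs_nonneg u)
  rcases le_or_gt |u| 1 with hu | hu
  · have := (abs_le.mp (abs_exp_sub_one_sub_id_le hu)).2
    nlinarith [sq_nonneg u]
  rcases le_or_gt 0 u with hu0 | hu0
  · rw [abs_of_nonneg hu0] at hu ⊢
    nlinarith [mul_nonneg (by nlinarith : (0 : ℝ) ≤ u ^ 2 - 1) (exp_pos u).le]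
  · have : exp u ≤ 1 := exp_le_one_iff.mpr hu0.le
    rw [abs_of_neg hu0] at hu
    nlinarith

lemma sq_le_two_div_sq_mul_exp_mul_abs {c : ℝ} (hc : 0 < c) (x : ℝ) :
    x ^ 2 ≤ 2 / c ^ 2 * exp (c * |x|) := by
  have h := quadratic_le_exp_of_nonneg (mul_nonneg hc.le (abs_nonneg x))
  rw [div_mul_eq_mul_div, le_div_iff₀ (by positivity), ← sq_abs]
  nlinarith [mul_nonneg hc.le (abs_nonneg x)]

lemma exp_mul_le_one_add_add_mul_sq {a t : ℝ} (ha : 0 < a) (ht : |t| ≤ a / 2) (x : ℝ) :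
    exp (t * x) ≤ 1 + t * x + 8 / a ^ 2 * exp (a * |x|) * t ^ 2 := by
  have hx : x ^ 2 ≤ 8 / a ^ 2 * exp (a / 2 * |x|) := by
    convert sq_le_two_div_sq_mul_exp_mul_abs (half_pos ha) x using 2; ring
  have hexp : exp (|t| * |x|) ≤ exp (a / 2 * |x|) := by gcongr
  have hsplit : exp (a * |x|) = exp (a / 2 * |x|) * exp (a / 2 * |x|) := by
    rw [← exp_add]; ring_nf
  calc exp (t * x) ≤ 1 + t * x + t ^ 2 * (x ^ 2 * exp (|t| * |x|)) := by
        convert exp_le_one_add_add_sq_mul_exp_abs (t * x) using 2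
        rw [abs_mul]; ring
    _ ≤ 1 + t * x + t ^ 2 * (8 / a ^ 2 * exp (a / 2 * |x|) * exp (a / 2 * |x|)) := by
        gcongr
    _ = 1 + t * x + 8 / a ^ 2 * exp (a * |x|) * t ^ 2 := by rw [hsplit]; ring

end Real

namespace ProbabilityTheory

variable {Ω : Type*} [MeasurableSpace Ω] {μ : Measure Ω}

lemma mgf_le_exp_mul_sq [IsProbabilityMeasure μ] {X : Ω → ℝ} {a t : ℝ} (ha : 0 < a)
    (hpos : Integrable (fun ω ↦ exp (a * X ω)) μ) (hneg : Integrable (fun ω ↦ exp (-a * X ω)) μ)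
    (hmean : μ[X] = 0) (ht : |t| ≤ a / 2) :
    mgf X μ t ≤ exp (8 / a ^ 2 * (∫ ω, exp (a * |X ω|) ∂μ) * t ^ 2) := by
  have hX : Integrable X μ := by
    simpa using integrable_pow_of_integrable_exp_mul ha.ne' hpos hneg 1
  have habs : Integrable (fun ω ↦ exp (a * |X ω|)) μ := integrable_exp_mul_abs hpos hneg
  have hlin : Integrable (fun ω ↦ 1 + t * X ω) μ := (integrable_const 1).add (hX.const_mul t)
  have hquad : Integrable (fun ω ↦ 8 / a ^ 2 * exp (a * |X ω|) * t ^ 2) μ :=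
    (habs.const_mul _).mul_const _
  calc mgf X μ t ≤ ∫ ω, (1 + t * X ω + 8 / a ^ 2 * exp (a * |X ω|) * t ^ 2) ∂μ :=
        integral_mono_of_nonneg (ae_of_all _ fun ω ↦ (exp_pos _).le) (hlin.add hquad)
          (ae_of_all _ fun ω ↦ exp_mul_le_one_add_add_mul_sq ha ht (X ω))
    _ = 8 / a ^ 2 * (∫ ω, exp (a * |X ω|) ∂μ) * t ^ 2 + 1 := by
        rw [integral_add hlin hquad, integral_add (integrable_const 1) (hX.const_mul t),
          integral_const_mul, hmean, integral_mul_const, integral_const_mul]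
        simp only [integral_const, probReal_univ, smul_eq_mul, mul_one, mul_zero, add_zero]
        ring
    _ ≤ exp (8 / a ^ 2 * (∫ ω, exp (a * |X ω|) ∂μ) * t ^ 2) := add_one_le_exp _

end ProbabilityTheory

lemma walkS_eq_sum {Ω : Type*} (ξ : ℕ → Ω → ℝ) (k : ℕ) :
    walkS ξ k = ∑ i ∈ Finset.range k, ξ i := by
  ext ω
  simp [walkS]

section RandomWalk

variable {Ω : Type*} [MeasurableSpace Ω] {μ : Measure Ω} {ξ : ℕ → Ω → ℝ}

lemma mgf_walkS (hmeas : ∀ i, Measurable (ξ i)) (hindep : iIndepFun ξ μ)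
    (hident : ∀ i, IdentDistrib (ξ i) (ξ 0) μ μ) (k : ℕ) (t : ℝ) :
    mgf (walkS ξ k) μ t = mgf (ξ 0) μ t ^ k := by
  rw [walkS_eq_sum, hindep.mgf_sum hmeas, Finset.prod_eq_pow_card
    fun i _ ↦ mgf_congr_of_identDistrib (ξ i) (ξ 0) (hident i) t, Finset.card_range]

lemma measure_walkS_ge_le [IsFiniteMeasure μ] (hmeas : ∀ i, Measurable (ξ i))
    (hindep : iIndepFun ξ μ) (hident : ∀ i, IdentDistrib (ξ i) (ξ 0) μ μ) {t K : ℝ} (ht : 0 ≤ t)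
    (hint : Integrable (fun ω ↦ exp (t * ξ 0 ω)) μ) (hmgf : mgf (ξ 0) μ t ≤ exp (K * t ^ 2))
    (k : ℕ) (A : ℝ) :
    (μ {ω | A ≤ walkS ξ k ω}).toReal ≤ exp (-t * A + k * K * t ^ 2) := by
  have hint_walk : Integrable (fun ω ↦ exp (t * walkS ξ k ω)) μ := by
    rw [walkS_eq_sum]
    exact hindep.integrable_exp_mul_sum hmeas fun i _ ↦
      ((hident i).comp (measurable_const_mul t).exp).integrable_iff.mpr hint
  calc (μ {ω | A ≤ walkS ξ k ω}).toReal ≤ exp (-t * A) * mgf (walkS ξ k) μ t :=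
        measure_ge_le_exp_mul_mgf A ht hint_walk
    _ ≤ exp (-t * A) * exp (K * t ^ 2) ^ k := by
        rw [mgf_walkS hmeas hindep hident]
        gcongr
        exact mgf_nonneg
    _ = exp (-t * A + k * K * t ^ 2) := by
        rw [← exp_nat_mul, ← exp_add, mul_assoc]

end RandomWalk

lemma eventually_rpow_le_exp_mul_rpow {δ C : ℝ} (hδ : δ < 1) (hC : 0 < C) :
    ∀ᶠ A in atTop, A ^ (1 + δ) ≤ exp (C * A ^ (1 - δ)) := by
  have hlittle := (isLittleO_rpow_exp_pos_mul_atTop ((1 + δ) / (1 - δ)) hC).comp_tendsto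
    (tendsto_rpow_atTop (sub_pos.mpr hδ))
  filter_upwards [hlittle.bound one_pos, eventually_gt_atTop 0] with A hA hA0
  have hpow : (A ^ (1 - δ)) ^ ((1 + δ) / (1 - δ)) = A ^ (1 + δ) := by
    rw [← rpow_mul hA0.le, mul_div_cancel₀ _ (sub_pos.mpr hδ).ne']
  simpa [Function.comp, hpow, abs_of_pos (rpow_pos_of_pos hA0 _)] using hA

lemma chernoff_exponent_le_s6 {δ K θ A k : ℝ} (hK : 0 ≤ K) (hKθ : K * θ ≤ 1 / 2) (hθ : 0 ≤ θ)
    (hA : 0 < A) (hk : k ≤ A ^ (1 + δ)) :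
    -(θ * A ^ (-δ)) * A + k * K * (θ * A ^ (-δ)) ^ 2 ≤ -(θ / 2) * A ^ (1 - δ) := by
  have e1 : A ^ (-δ) * A = A ^ (1 - δ) := by
    rw [← rpow_add_one hA.ne']; ring_nf
  have e2 : A ^ (1 + δ) * (A ^ (-δ) * A ^ (-δ)) = A ^ (1 - δ) := by
    rw [← rpow_add hA, ← rpow_add hA]; ring_nf
  have hkK : k * K * (θ * A ^ (-δ)) ^ 2 ≤ A ^ (1 + δ) * K * (θ * A ^ (-δ)) ^ 2 := by gcongr
  have hKθ2 : K * θ ^ 2 * A ^ (1 - δ) ≤ θ / 2 * A ^ (1 - δ) := by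
    gcongr; nlinarith
  have h1 : θ * A ^ (-δ) * A = θ * A ^ (1 - δ) := by rw [mul_assoc, e1]
  have h2 : A ^ (1 + δ) * K * (θ * A ^ (-δ)) ^ 2 = K * θ ^ 2 * A ^ (1 - δ) := by
    linear_combination K * θ ^ 2 * e2
  linarith

lemma exists_sum_le_exp_neg_rpow {δ K c : ℝ} (hδ0 : 0 ≤ δ) (hδ1 : δ < 1) (hK : 0 < K)
    (hc : 0 < c) {p : ℕ → ℝ → ℝ}
    (hp : ∀ k A t, 0 ≤ t → t ≤ c → p k A ≤ exp (-t * A + k * K * t ^ 2)) :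
    ∃ C, 0 < C ∧ ∃ A₀, 0 < A₀ ∧ ∀ A, A₀ ≤ A →
      ∑ k ∈ Finset.Icc 1 ⌊A ^ (1 + δ)⌋₊, p k A ≤ exp (-C * A ^ (1 - δ)) := by
  set θ := min c (1 / (2 * K))
  have hθ : 0 < θ := lt_min hc (by positivity)
  have hKθ : K * θ ≤ 1 / 2 := by
    have := min_le_right c (1 / (2 * K))
    rw [le_div_iff₀ (by positivity)] at this
    linarith
  obtain ⟨A₀, hA₀⟩ := eventually_atTop.mp
    ((eventually_rpow_le_exp_mul_rpow hδ1 (by positivity : 0 < θ / 4)).and (eventually_ge_atTop 1))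
  refine ⟨θ / 4, by positivity, max A₀ 1, by positivity, fun A hA ↦ ?_⟩
  obtain ⟨hpoly, hA1⟩ := hA₀ A (le_of_max_le_left hA)
  have hA : 0 < A := by linarith
  -- Chernoff's bound is used at `t = θ A^{-δ}`, which lies in `[0, c]` since `A ≥ 1`.
  have hterm : ∀ k ∈ Finset.Icc 1 ⌊A ^ (1 + δ)⌋₊, p k A ≤ exp (-(θ / 2) * A ^ (1 - δ)) := by
    intro k hk
    have hkA : (k : ℝ) ≤ A ^ (1 + δ) :=
      (Nat.cast_le.mpr (Finset.mem_Icc.mp hk).2).trans (Nat.floor_le (by positivity))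
    have ht : θ * A ^ (-δ) ≤ c :=
      calc θ * A ^ (-δ) ≤ θ * 1 := by
            gcongr
            exact rpow_le_one_of_one_le_of_nonpos hA1 (by linarith)
        _ ≤ c := (mul_one θ).trans_le (min_le_left _ _)
    refine (hp k A _ (by positivity) ht).trans (exp_le_exp.mpr ?_)
    exact chernoff_exponent_le_s6 hK.le hKθ hθ.le hA hkA
  calc ∑ k ∈ Finset.Icc 1 ⌊A ^ (1 + δ)⌋₊, p k A
      ≤ (Finset.Icc 1 ⌊A ^ (1 + δ)⌋₊).card • exp (-(θ / 2) * A ^ (1 - δ)) :=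
        Finset.sum_le_card_nsmul _ _ _ hterm
    _ ≤ A ^ (1 + δ) * exp (-(θ / 2) * A ^ (1 - δ)) := by
        rw [nsmul_eq_mul, Nat.card_Icc, Nat.add_sub_cancel]
        gcongr
        exact Nat.floor_le (by positivity)
    _ ≤ exp (θ / 4 * A ^ (1 - δ)) * exp (-(θ / 2) * A ^ (1 - δ)) := by gcongr
    _ = exp (-(θ / 4) * A ^ (1 - δ)) := by rw [← exp_add]; ring_nf

theorem sum_S_large_bound_general
    {Ω : Type*} [MeasurableSpace Ω] (μ : Measure Ω) [IsProbabilityMeasure μ]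
    (ξ : ℕ → Ω → ℝ) (hmeas : ∀ i, Measurable (ξ i))
    (hindep : iIndepFun ξ μ)
    (hident : ∀ i, IdentDistrib (ξ i) (ξ 0) μ μ)
    (hmean : ∫ ω, ξ 0 ω ∂μ = 0)
    (hexp : ∃ δ₀ : ℝ, 0 < δ₀ ∧
      Integrable (fun ω => Real.exp (-δ₀ * ξ 0 ω)) μ ∧
      Integrable (fun ω => Real.exp ((1 + δ₀) * ξ 0 ω)) μ)
    :
    ∀ δ : ℝ, 0 ≤ δ → δ < 1 → ∃ C : ℝ, 0 < C ∧ ∃ A₀ : ℝ, 0 < A₀ ∧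
      ∀ A : ℝ, A₀ ≤ A →
        ∑ k ∈ Finset.Icc 1 ⌊A ^ (1 + δ)⌋₊, (μ {ω | A ≤ walkS ξ k ω}).toReal
          ≤ Real.exp (-C * A ^ (1 - δ)) := by
  intro δ hδ0 hδ1
  obtain ⟨a, ha, hneg, hbig⟩ := hexp
  have hpos : Integrable (fun ω ↦ exp (a * ξ 0 ω)) μ :=
    integrable_exp_mul_of_le_of_le hneg hbig (by linarith) (by linarith)
  have hK : 0 < 8 / a ^ 2 * ∫ ω, exp (a * |ξ 0 ω|) ∂μ :=
    mul_pos (by positivity) (integral_exp_pos (integrable_exp_mul_abs hpos hneg))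
  refine exists_sum_le_exp_neg_rpow hδ0 hδ1 hK (half_pos ha) fun k A t ht0 htc ↦ ?_
  refine measure_walkS_ge_le hmeas hindep hident ht0 ?_ ?_ k A
  · exact integrable_exp_mul_of_le_of_le hneg hpos (by linarith) (by linarith)
  · exact mgf_le_exp_mul_sq ha hpos hneg hmean (abs_le.mpr ⟨by linarith, htc⟩)

theorem sum_S_large_bound
    {Ω : Type*} [MeasurableSpace Ω] (μ : Measure Ω) [IsProbabilityMeasure μ]
    (ξ : ℕ → Ω → ℝ) (hmeas : ∀ i, Measurable (ξ i))
    (hindep : iIndepFun ξ μ)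
    (hident : ∀ i, IdentDistrib (ξ i) (ξ 0) μ μ)
    (hmean : ∫ ω, ξ 0 ω ∂μ = 0)
    (hvar_int : Integrable (fun ω => (ξ 0 ω) ^ 2) μ)
    (hvar_pos : 0 < ∫ ω, (ξ 0 ω) ^ 2 ∂μ)
    (hexp : ∃ δ₀ : ℝ, 0 < δ₀ ∧
      Integrable (fun ω => Real.exp (-δ₀ * ξ 0 ω)) μ ∧
      Integrable (fun ω => Real.exp ((1 + δ₀) * ξ 0 ω)) μ)
    :
    ∀ δ : ℝ, 0 ≤ δ → δ < 1 → ∃ C : ℝ, 0 < C ∧ ∃ A₀ : ℝ, 0 < A₀ ∧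
      ∀ A : ℝ, A₀ ≤ A →
        ∑ k ∈ Finset.Icc 1 ⌊A ^ (1 + δ)⌋₊, (μ {ω | A ≤ walkS ξ k ω}).toReal
          ≤ Real.exp (-C * A ^ (1 - δ)) :=
  sum_S_large_bound_general μ ξ hmeas hindep hident hmean hexp
end

section
/- There exists a constant C > 0 (depending only on the law of ξ_1) such that for every A > 0, the series ∑_{n≥0} E[ e^{S_n − A} · 1{ S̲_n ≥ 0, S_n ≤ A } ] is at most C. -/
open MeasureTheory ProbabilityTheory Filter

/-!
Reversing the first `n` steps of the walk preserves its law and sends `S_k` to `S_n - S_{n-k}`,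
so `{S̲_n ≥ 0, S_n ∈ B}` has the same probability as `{S̄_n = S_n, S_n ∈ B}`: the event that
`n` is a weak ascending ladder epoch with height in `B`. Fix `L > 0` with `p = P(ξ ≥ L) > 0` and
slice `(-∞, A]` into the windows `(A - (j+1)L, A - jL]`, on which `e^{S_n - A} ≤ e^{-jL}`.
The expected number of ladder epochs with height in a window of length `L` is at most `1/p`:
the events "ladder epoch in the window, followed by a step `≥ L`" are disjoint in `n`, and each
has probability `p` times that of the ladder epoch, by independence. Summing the geometric
series gives `C = 1/((1 - e^{-L}) p)`.
-/

open Set Real Function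
open scoped ENNReal

lemma ofReal_exp_sub_le_tsum_indicator {L A x : ℝ} (hL : 0 < L) (hx : x ≤ A) :
    ENNReal.ofReal (exp (x - A)) ≤ ∑' j : ℕ,
      (Ioc (A - j * L - L) (A - j * L)).indicator (fun _ => ENNReal.ofReal (exp (-L)) ^ j) x := by
  set j := ⌊(A - x) / L⌋₊
  have hj : j * L ≤ A - x :=
    (le_div_iff₀ hL).1 (Nat.floor_le (div_nonneg (sub_nonneg.2 hx) hL.le))
  have hj' : A - x < (j + 1) * L := (div_lt_iff₀ hL).1 (Nat.lt_floor_add_one _)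
  refine le_trans ?_ (ENNReal.le_tsum j)
  rw [indicator_of_mem (show x ∈ Ioc _ _ from ⟨by linarith, by linarith⟩),
    ← ENNReal.ofReal_pow (exp_nonneg _), ← exp_nat_mul]
  exact ENNReal.ofReal_le_ofReal (exp_le_exp.2 (by linarith))

section

variable {Ω : Type*}

lemma measurable_iSup_comap_of_lt {β : Type*} [mβ : MeasurableSpace β] {X : ℕ → Ω → β}
    {i n : ℕ} (hi : i < n) : Measurable[⨆ j < n, mβ.comap (X j)] (X i) :=
  measurable_iff_comap_le.2 (le_iSup₂ (f := fun j (_ : j < n) => mβ.comap (X j)) i hi)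

variable [MeasurableSpace Ω] {μ : Measure Ω}

lemma indep_iSup_comap_lt {β : Type*} [mβ : MeasurableSpace β] {X : ℕ → Ω → β}
    (hmeas : ∀ i, Measurable (X i)) (hindep : iIndepFun X μ) (n : ℕ) :
    Indep (⨆ i < n, mβ.comap (X i)) (mβ.comap (X n)) μ := by
  simpa using indep_iSup_of_disjoint (m := fun i => mβ.comap (X i)) (fun i => (hmeas i).comap_le)
    hindep.iIndep (S := {i | i < n}) (T := {n}) (by simp)

lemma exists_pos_measure_le_of_integral_eq_zero {X : Ω → ℝ} (hX : Integrable X μ)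
    (hmean : ∫ ω, X ω ∂μ = 0) (hsq : 0 < ∫ ω, X ω ^ 2 ∂μ) :
    ∃ L > 0, 0 < μ {ω | L ≤ X ω} := by
  have hpos : μ {ω | 0 < X ω} ≠ 0 := by
    intro h
    have hnonneg : 0 ≤ᵐ[μ] -X := by
      rw [EventuallyLE, ae_iff]
      simpa using h
    have hzero : -X =ᵐ[μ] 0 :=
      (integral_eq_zero_iff_of_nonneg_ae hnonneg hX.neg).1 (by simp [integral_neg, hmean])
    have hsq0 : (fun ω => X ω ^ 2) =ᵐ[μ] 0 := hzero.mono fun ω hω => by simp_all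
    have : ∫ ω, X ω ^ 2 ∂μ = 0 := by simp [integral_congr_ae hsq0]
    exact hsq.ne' this
  have hunion : {ω | 0 < X ω} = ⋃ k : ℕ, {ω | 1 / (k + 1 : ℝ) ≤ X ω} := by
    ext ω
    simp only [mem_iUnion, mem_ofPred_eq]
    exact ⟨fun h => (exists_nat_one_div_lt h).imp fun _ => le_of_lt,
      fun ⟨_, hk⟩ => Nat.one_div_pos_of_nat.trans_le hk⟩
  obtain ⟨k, hk⟩ := exists_measure_pos_of_not_measure_iUnion_null (hunion ▸ hpos)
  exact ⟨1 / (k + 1), by positivity, hk⟩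

lemma summable_integral_and_tsum_le_of_tsum_lintegral_le {ν : ℕ → Measure Ω}
    {f : ℕ → Ω → ℝ} (hf : ∀ n, 0 ≤ f n) (hfm : ∀ n, AEStronglyMeasurable (f n) (ν n))
    {C : ℝ≥0∞} (hC : C ≠ ∞) (h : ∑' n, ∫⁻ ω, ENNReal.ofReal (f n ω) ∂ν n ≤ C) :
    Summable (fun n => ∫ ω, f n ω ∂ν n) ∧ ∑' n, ∫ ω, f n ω ∂ν n ≤ C.toReal := by
  have hfin : ∑' n, ∫⁻ ω, ENNReal.ofReal (f n ω) ∂ν n ≠ ∞ := ne_top_of_le_ne_top hC h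
  simp_rw [fun n => integral_eq_lintegral_of_nonneg_ae (ae_of_all _ (hf n)) (hfm n)]
  refine ⟨ENNReal.summable_toReal hfin, ?_⟩
  rw [← ENNReal.tsum_toReal_eq fun n => ne_top_of_le_ne_top hfin (ENNReal.le_tsum n)]
  exact ENNReal.toReal_mono hC h

end

namespace RandomWalk

variable {Ω : Type*} {ξ : ℕ → Ω → ℝ} {n : ℕ}

@[simp]
lemma walkS_zero (ξ : ℕ → Ω → ℝ) (ω : Ω) : walkS ξ 0 ω = 0 := rfl

lemma walkS_succ (ξ : ℕ → Ω → ℝ) (n : ℕ) (ω : Ω) :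
    walkS ξ (n + 1) ω = walkS ξ n ω + ξ n ω :=
  Finset.sum_range_succ _ _

lemma walkMax_le_iff {ω : Ω} {x : ℝ} : walkMax ξ n ω ≤ x ↔ ∀ k ≤ n, walkS ξ k ω ≤ x := by
  simp [walkMax]

lemma le_walkMin_iff {ω : Ω} {x : ℝ} : x ≤ walkMin ξ n ω ↔ ∀ k ≤ n, x ≤ walkS ξ k ω := by
  simp [walkMin]

lemma measurable_walkS {m : MeasurableSpace Ω} {k : ℕ} (hξ : ∀ i < n, Measurable[m] (ξ i))
    (hk : k ≤ n) : Measurable[m] (walkS ξ k) :=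
  Finset.measurable_sum _ fun i hi => hξ i ((Finset.mem_range.mp hi).trans_le hk)

lemma measurable_walkMax {m : MeasurableSpace Ω} (hξ : ∀ i < n, Measurable[m] (ξ i)) :
    Measurable[m] (walkMax ξ n) :=
  Finset.measurable_range_sup'' fun _ hk => measurable_walkS hξ hk

lemma measurableSet_ladder {m : MeasurableSpace Ω} (hξ : ∀ i < n, Measurable[m] (ξ i))
    {B : Set ℝ} (hB : MeasurableSet B) :
    MeasurableSet[m] {ω | walkMax ξ n ω ≤ walkS ξ n ω ∧ walkS ξ n ω ∈ B} :=
  (measurableSet_le (measurable_walkMax hξ) (measurable_walkS hξ le_rfl)).inter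
    (measurable_walkS hξ le_rfl hB)

def revBelow (n i : ℕ) : ℕ := if i < n then n - 1 - i else i

lemma revBelow_injective (n : ℕ) : Injective (revBelow n) :=
  Function.Involutive.injective fun i => by unfold revBelow; split_ifs <;> omega

lemma walkS_revBelow (ξ : ℕ → Ω → ℝ) (ω : Ω) {k : ℕ} (hk : k ≤ n) :
    walkS (fun i => ξ (revBelow n i)) k ω = walkS ξ n ω - walkS ξ (n - k) ω := by
  induction k with
  | zero => simp
  | succ k ih =>
    have hsplit : walkS ξ (n - k) ω = walkS ξ (n - (k + 1)) ω + ξ (n - 1 - k) ω := by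
      rw [show n - k = n - (k + 1) + 1 by omega, walkS_succ]; congr 2; omega
    rw [walkS_succ, ih (by omega), hsplit, revBelow, if_pos (by omega)]
    ring

lemma walkMax_revBelow_le_iff (ξ : ℕ → Ω → ℝ) (ω : Ω) :
    walkMax (fun i => ξ (revBelow n i)) n ω ≤ walkS (fun i => ξ (revBelow n i)) n ω ↔
      0 ≤ walkMin ξ n ω := by
  rw [walkMax_le_iff, le_walkMin_iff, walkS_revBelow ξ ω le_rfl, Nat.sub_self]
  refine ⟨fun h k hk => ?_, fun h k hk => ?_⟩
  · have := h (n - k) (Nat.sub_le n k)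
    rw [walkS_revBelow ξ ω (Nat.sub_le n k), Nat.sub_sub_self hk] at this
    simpa using this
  · rw [walkS_revBelow ξ ω hk]
    simpa using h (n - k) (Nat.sub_le n k)

variable [MeasurableSpace Ω] {μ : Measure Ω}

lemma measure_walkMin_nonneg_eq_measure_ladder
    (hindep : iIndepFun ξ μ) (hident : ∀ i, IdentDistrib (ξ i) (ξ 0) μ μ)
    (n : ℕ) {B : Set ℝ} (hB : MeasurableSet B) :
    μ {ω | 0 ≤ walkMin ξ n ω ∧ walkS ξ n ω ∈ B} =
      μ {ω | walkMax ξ n ω ≤ walkS ξ n ω ∧ walkS ξ n ω ∈ B} := by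
  let coord : ℕ → (ℕ → ℝ) → ℝ := fun i x => x i
  let Λ : Set (ℕ → ℝ) := {x | walkMax coord n x ≤ walkS coord n x ∧ walkS coord n x ∈ B}
  have hΛ : MeasurableSet Λ := measurableSet_ladder (fun i _ => measurable_pi_apply i) hB
  have hrev : IdentDistrib (fun ω i => ξ (revBelow n i) ω) (fun ω i => ξ i ω) μ μ :=
    .pi (fun i => (hident _).trans (hident i).symm) (hindep.precomp (revBelow_injective n))
      hindep
  have hpre : {ω | 0 ≤ walkMin ξ n ω ∧ walkS ξ n ω ∈ B} =
      (fun ω i => ξ (revBelow n i) ω) ⁻¹' Λ := by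
    ext ω
    refine (and_congr (walkMax_revBelow_le_iff ξ ω) ?_).symm
    change walkS (fun i => ξ (revBelow n i)) n ω ∈ B ↔ _
    rw [walkS_revBelow ξ ω le_rfl, Nat.sub_self, walkS_zero, sub_zero]
  rw [hpre, hrev.measure_mem_eq hΛ]
  rfl

lemma tsum_measure_ladder_le [IsProbabilityMeasure μ] (hmeas : ∀ i, Measurable (ξ i))
    (hindep : iIndepFun ξ μ) (hident : ∀ i, IdentDistrib (ξ i) (ξ 0) μ μ) (b L : ℝ) :
    ∑' n, μ {ω | walkMax ξ n ω ≤ walkS ξ n ω ∧ walkS ξ n ω ∈ Ioc (b - L) b} ≤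
      (μ {ω | L ≤ ξ 0 ω})⁻¹ := by
  set ladder := fun n => {ω | walkMax ξ n ω ≤ walkS ξ n ω ∧ walkS ξ n ω ∈ Ioc (b - L) b}
  set exit := fun n => ladder n ∩ {ω | L ≤ ξ n ω}
  have hexit : ∀ n, μ (exit n) = μ (ladder n) * μ {ω | L ≤ ξ 0 ω} := by
    intro n
    refine ((Indep_iff _ _ μ).1 (indep_iSup_comap_lt hmeas hindep n) _ _
      (measurableSet_ladder (fun _ => measurable_iSup_comap_of_lt) measurableSet_Ioc)
      ⟨Ici L, measurableSet_Ici, rfl⟩).trans ?_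
    exact congrArg _ ((hident n).measure_mem_eq measurableSet_Ici)
  -- a step `≥ L` from a height above `b - L` lands above `b`, and later ladder heights stay there
  have hdisj : Pairwise (Disjoint on exit) := by
    refine (pairwise_disjoint_on exit).2 fun m n hmn => Set.disjoint_left.2 ?_
    rintro ω ⟨⟨-, hm, -⟩, hstep⟩ ⟨⟨hmax, -, hn⟩, -⟩
    have := walkMax_le_iff.1 hmax (m + 1) hmn
    rw [walkS_succ] at this
    linarith [hstep.out]
  have hexit_meas : ∀ n, MeasurableSet (exit n) := fun n =>
    (measurableSet_ladder (fun i _ => hmeas i) measurableSet_Ioc).inter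
      (measurableSet_le measurable_const (hmeas n))
  rw [ENNReal.le_inv_iff_mul_le, ← ENNReal.tsum_mul_right]
  calc ∑' n, μ (ladder n) * μ {ω | L ≤ ξ 0 ω} = μ (⋃ n, exit n) := by
        simp_rw [← hexit, measure_iUnion hdisj hexit_meas]
    _ ≤ 1 := prob_le_one

lemma setLIntegral_exp_le_tsum (hmeas : ∀ i, Measurable (ξ i)) {L : ℝ} (hL : 0 < L) (A : ℝ)
    (n : ℕ) :
    ∫⁻ ω in {ω | 0 ≤ walkMin ξ n ω ∧ walkS ξ n ω ≤ A}, ENNReal.ofReal (exp (walkS ξ n ω - A)) ∂μ ≤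
      ∑' j : ℕ, ENNReal.ofReal (exp (-L)) ^ j *
        μ {ω | 0 ≤ walkMin ξ n ω ∧ walkS ξ n ω ∈ Ioc (A - j * L - L) (A - j * L)} := by
  set g := fun (j : ℕ) (x : ℝ) =>
    (Ioc (A - j * L - L) (A - j * L)).indicator (fun _ => ENNReal.ofReal (exp (-L)) ^ j) x
  have hS : Measurable (walkS ξ n) := measurable_walkS (fun i _ => hmeas i) le_rfl
  have hg : ∀ j, Measurable fun ω => g j (walkS ξ n ω) := fun j =>
    (measurable_const.indicator measurableSet_Ioc).comp hS
  calc _ ≤ ∫⁻ ω in {ω | 0 ≤ walkMin ξ n ω ∧ walkS ξ n ω ≤ A}, ∑' j, g j (walkS ξ n ω) ∂μ :=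
        setLIntegral_mono (.tsum hg) fun ω hω => ofReal_exp_sub_le_tsum_indicator hL hω.2
    _ ≤ ∫⁻ ω in {ω | 0 ≤ walkMin ξ n ω}, ∑' j, g j (walkS ξ n ω) ∂μ :=
        lintegral_mono_set fun ω hω => hω.1
    _ = ∑' j, ∫⁻ ω in {ω | 0 ≤ walkMin ξ n ω}, g j (walkS ξ n ω) ∂μ :=
        lintegral_tsum fun j => (hg j).aemeasurable
    _ = _ := by
        refine tsum_congr fun j => ?_
        rw [lintegral_indicator_const_comp hS measurableSet_Ioc,
          Measure.restrict_apply (hS measurableSet_Ioc), inter_comm]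
        rfl

lemma tsum_setLIntegral_exp_le [IsProbabilityMeasure μ] (hmeas : ∀ i, Measurable (ξ i))
    (hindep : iIndepFun ξ μ) (hident : ∀ i, IdentDistrib (ξ i) (ξ 0) μ μ) {L : ℝ} (hL : 0 < L)
    (A : ℝ) :
    ∑' n, ∫⁻ ω in {ω | 0 ≤ walkMin ξ n ω ∧ walkS ξ n ω ≤ A},
        ENNReal.ofReal (exp (walkS ξ n ω - A)) ∂μ ≤
      (1 - ENNReal.ofReal (exp (-L)))⁻¹ * (μ {ω | L ≤ ξ 0 ω})⁻¹ := by
  calc _ ≤ ∑' n, ∑' j : ℕ, ENNReal.ofReal (exp (-L)) ^ j *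
          μ {ω | 0 ≤ walkMin ξ n ω ∧ walkS ξ n ω ∈ Ioc (A - j * L - L) (A - j * L)} :=
        ENNReal.tsum_le_tsum fun n => setLIntegral_exp_le_tsum hmeas hL A n
    _ = ∑' j : ℕ, ENNReal.ofReal (exp (-L)) ^ j * ∑' n,
          μ {ω | walkMax ξ n ω ≤ walkS ξ n ω ∧ walkS ξ n ω ∈ Ioc (A - j * L - L) (A - j * L)} := by
        rw [ENNReal.tsum_comm]
        refine tsum_congr fun j => ?_
        rw [ENNReal.tsum_mul_left]
        simp_rw [measure_walkMin_nonneg_eq_measure_ladder hindep hident _ measurableSet_Ioc]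
    _ ≤ ∑' j : ℕ, ENNReal.ofReal (exp (-L)) ^ j * (μ {ω | L ≤ ξ 0 ω})⁻¹ :=
        ENNReal.tsum_le_tsum fun j =>
          mul_le_mul_right (tsum_measure_ladder_le hmeas hindep hident _ L) _
    _ = _ := by rw [ENNReal.tsum_mul_right, ENNReal.tsum_geometric]

end RandomWalk

open RandomWalk

theorem sum_exp_mS_S_small_bound_general
    {Ω : Type*} [MeasurableSpace Ω] (μ : Measure Ω) [IsProbabilityMeasure μ]
    (ξ : ℕ → Ω → ℝ) (hmeas : ∀ i, Measurable (ξ i))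
    (hindep : iIndepFun ξ μ)
    (hident : ∀ i, IdentDistrib (ξ i) (ξ 0) μ μ)
    (hmean : ∫ ω, ξ 0 ω ∂μ = 0)
    (hvar_int : Integrable (fun ω => (ξ 0 ω) ^ 2) μ)
    (hvar_pos : 0 < ∫ ω, (ξ 0 ω) ^ 2 ∂μ)
    :
    ∃ C : ℝ, 0 < C ∧ ∀ A : ℝ, 0 < A →
      Summable (fun n : ℕ =>
        ∫ ω in {ω | 0 ≤ walkMin ξ n ω ∧ walkS ξ n ω ≤ A},
          Real.exp (walkS ξ n ω - A) ∂μ) ∧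
      ∑' n : ℕ, ∫ ω in {ω | 0 ≤ walkMin ξ n ω ∧ walkS ξ n ω ≤ A},
          Real.exp (walkS ξ n ω - A) ∂μ ≤ C := by
  have hint : Integrable (ξ 0) μ :=
    ((memLp_two_iff_integrable_sq (hmeas 0).aestronglyMeasurable).2 hvar_int).integrable
      one_le_two
  obtain ⟨L, hL, hp⟩ := exists_pos_measure_le_of_integral_eq_zero hint hmean hvar_pos
  have hr : ENNReal.ofReal (exp (-L)) < 1 :=
    ENNReal.ofReal_lt_one.2 (exp_lt_one_iff.2 (neg_neg_of_pos hL))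
  set C : ℝ≥0∞ := (1 - ENNReal.ofReal (exp (-L)))⁻¹ * (μ {ω | L ≤ ξ 0 ω})⁻¹
  have hC : C ≠ ∞ :=
    ENNReal.mul_ne_top (ENNReal.inv_ne_top.2 (tsub_pos_of_lt hr).ne') (ENNReal.inv_ne_top.2 hp.ne')
  have hC₀ : C ≠ 0 := mul_ne_zero (ENNReal.inv_ne_zero.2 (ENNReal.sub_ne_top ENNReal.one_ne_top))
    (ENNReal.inv_ne_zero.2 (measure_ne_top μ _))
  refine ⟨C.toReal, ENNReal.toReal_pos hC₀ hC, fun A _ => ?_⟩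
  exact summable_integral_and_tsum_le_of_tsum_lintegral_le (fun _ _ => (exp_pos _).le)
    (fun _ => ((measurable_walkS (fun i _ => hmeas i) le_rfl).sub_const A).exp.aestronglyMeasurable)
    hC (tsum_setLIntegral_exp_le hmeas hindep hident hL A)

theorem sum_exp_mS_S_small_bound
    {Ω : Type*} [MeasurableSpace Ω] (μ : Measure Ω) [IsProbabilityMeasure μ]
    (ξ : ℕ → Ω → ℝ) (hmeas : ∀ i, Measurable (ξ i))
    (hindep : iIndepFun ξ μ)
    (hident : ∀ i, IdentDistrib (ξ i) (ξ 0) μ μ)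
    (hmean : ∫ ω, ξ 0 ω ∂μ = 0)
    (hvar_int : Integrable (fun ω => (ξ 0 ω) ^ 2) μ)
    (hvar_pos : 0 < ∫ ω, (ξ 0 ω) ^ 2 ∂μ)
    (hexp : ∃ δ₀ : ℝ, 0 < δ₀ ∧
      Integrable (fun ω => Real.exp (-δ₀ * ξ 0 ω)) μ ∧
      Integrable (fun ω => Real.exp ((1 + δ₀) * ξ 0 ω)) μ)
    :
    ∃ C : ℝ, 0 < C ∧ ∀ A : ℝ, 0 < A →
      Summable (fun n : ℕ =>
        ∫ ω in {ω | 0 ≤ walkMin ξ n ω ∧ walkS ξ n ω ≤ A},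
          Real.exp (walkS ξ n ω - A) ∂μ) ∧
      ∑' n : ℕ, ∫ ω in {ω | 0 ≤ walkMin ξ n ω ∧ walkS ξ n ω ≤ A},
          Real.exp (walkS ξ n ω - A) ∂μ ≤ C :=
  sum_exp_mS_S_small_bound_general μ ξ hmeas hindep hident hmean hvar_int hvar_pos
end
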